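/- arXiv:2411.19291 — 7 statements merged into one kernel-verified Lean document; each statement's English description precedes it below -/
import Mathlib

section
/- The recurrence f(n) = f(n-1) + 2·f(n-2) + 1 with f(1) = 1 and f(2) = 2 has closed form f(n) = ⌊2^{n+1}/3⌋ for all n ≥ 1. -/
theorem spinout_moves_closed_form (f : ℕ → ℕ)
    (h1 : f 1 = 1) (h2 : f 2 = 2)
    (hrec : ∀ n, 3 ≤ n → f n = f (n - 1) + 2 * f (n - 2) + 1) :
    ∀ n, 1 ≤ n → f n = 2 ^ (n + 1) / 3 := by
  intro n hn
  induction n using Nat.strong_induction_on with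
  | _ n ih =>
    match n, hn with
    | 1, _ => simpa using h1
    | 2, _ => simpa using h2
    | (k+3), _ =>
      have h1' := ih (k+2) (by omega) (by omega)
      have h2' := ih (k+1) (by omega) (by omega)
      have hr := hrec (k+3) (by omega)
      simp only [show k+3-1 = k+2 from rfl, show k+3-2 = k+1 from rfl] at hr
      rw [hr, h1', h2']
      show 2^(k+3)/3 + 2*(2^(k+2)/3) + 1 = 2^(k+4)/3
      have ha : ¬ (3 ∣ 2 ^ (k+2)) := by
        intro h
        have := Nat.Prime.dvd_of_dvd_pow Nat.prime_three h
        omega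
      have e1 : 2 ^ (k+3) = 2 * 2 ^ (k+2) := by ring
      have e2 : 2 ^ (k+4) = 4 * 2 ^ (k+2) := by ring
      obtain ⟨b, hb⟩ : ∃ b, 2^(k+2) = 3*b+1 ∨ 2^(k+2) = 3*b+2 :=
        ⟨2^(k+2)/3, by omega⟩
      rw [e1, e2]
      rcases hb with hb | hb <;> rw [hb] <;> omega
end

section
/- The recurrence g(n) = g(n-1) + 2·g(n-2) - 1 with g(1) = 2 and g(2) = 3 has closed form g(n) = ⌈2^{n+1}/3⌉ for all n ≥ 1. -/
lemma ceil_div_three (a : ℤ) : ⌈(a : ℚ) / 3⌉ = (a + 2) / 3 := by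
  rw [Int.ceil_eq_iff]
  have h0 := Int.mul_ediv_add_emod (a + 2) 3
  have hm0 := Int.emod_nonneg (a + 2) (by norm_num : (3:ℤ) ≠ 0)
  have hm1 := Int.emod_lt_of_pos (a + 2) (by norm_num : (0:ℤ) < 3)
  constructor
  · rw [lt_div_iff₀ (by norm_num : (0:ℚ) < 3)]
    have : ((a + 2) / 3 - 1) * 3 < a := by omega
    calc ((((a + 2) / 3 : ℤ) : ℚ) - 1) * 3 = ((((a + 2) / 3 - 1) * 3 : ℤ) : ℚ) := by push_cast; ring
    _ < (a : ℚ) := by exact_mod_cast this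
  · rw [div_le_iff₀ (by norm_num : (0:ℚ) < 3)]
    have : a ≤ ((a + 2) / 3) * 3 := by omega
    calc (a : ℚ) ≤ ((((a + 2) / 3) * 3 : ℤ) : ℚ) := by exact_mod_cast this
    _ = (((a + 2) / 3 : ℤ) : ℚ) * 3 := by push_cast; ring

lemma not_three_dvd_two_pow (k : ℕ) : ¬ (3 : ℤ) ∣ 2 ^ k := by
  intro h
  have := (Int.Prime.dvd_pow' (by norm_num) h)
  norm_num at this

theorem spinout_states_closed_form (g : ℕ → ℕ)
    (h1 : g 1 = 2) (h2 : g 2 = 3)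
    (hrec : ∀ n, 3 ≤ n → g n = g (n - 1) + 2 * g (n - 2) - 1) :
    ∀ n, 1 ≤ n → (g n : ℤ) = ⌈(2 : ℚ) ^ (n + 1) / 3⌉ := by
  have key : ∀ n, 1 ≤ n → (g n : ℤ) = (2 ^ (n + 1) + 2) / 3 := by
    intro n
    induction n using Nat.strong_induction_on with
    | _ n ih =>
      intro hn
      match n, hn with
      | 1, _ => norm_num [h1]
      | 2, _ => norm_num [h2]
      | (m + 3), _ =>
        have ih1 := ih (m + 2) (by omega) (by omega)
        have ih2 := ih (m + 1) (by omega) (by omega)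
        have hr := hrec (m + 3) (by omega)
        simp only [show m + 3 - 1 = m + 2 from rfl, show m + 3 - 2 = m + 1 from rfl] at hr
        have hd2 : ¬ (3 : ℤ) ∣ 2 ^ (m + 2) := not_three_dvd_two_pow _
        have hmod : (2:ℤ) ^ (m + 2) % 3 ≠ 0 := fun h => hd2 (Int.dvd_of_emod_eq_zero h)
        have hd3 : (0:ℤ) ≤ 2 ^ (m + 2) := by positivity
        have hp1 : (2:ℤ) ^ (m + 1 + 1) = 2 ^ (m + 2) := by ring
        have hp2 : (2:ℤ) ^ (m + 2 + 1) = 2 * 2 ^ (m + 2) := by ring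
        have hp3 : (2:ℤ) ^ (m + 3 + 1) = 4 * 2 ^ (m + 2) := by ring
        rw [hp1] at ih2
        rw [hp2] at ih1
        rw [hp3]
        have hg1 : 1 ≤ g (m + 2) := by
          by_contra hc
          have h0 : g (m + 2) = 0 := by omega
          rw [h0] at ih1
          simp only [Nat.cast_zero] at ih1
          omega
        have hcast : (g (m + 3) : ℤ) = (g (m + 2) : ℤ) + 2 * (g (m + 1) : ℤ) - 1 := by
          omega
        have hmain : ∀ P : ℤ, P % 3 ≠ 0 →
            (2 * P + 2) / 3 + 2 * ((P + 2) / 3) - 1 = (4 * P + 2) / 3 := by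
          intro P hP
          obtain ⟨q, hq⟩ : ∃ q, P = 3 * q + 1 ∨ P = 3 * q + 2 := ⟨P / 3, by omega⟩
          rcases hq with h | h <;> subst h <;> omega
        rw [hcast, ih1, ih2, hmain _ hmod]
  intro n hn
  rw [key n hn, show (2:ℚ)^(n+1)/3 = ((2^(n+1) : ℤ) : ℚ)/3 by push_cast; ring,
    ceil_div_three]
end

section
/- The change sequence for the shortest Ziggu solution has length 6·2^n - 3n - 6. Precisely, define lists S(n) and C(n) by S(1) = C(1) = [1,1,1], and for n ≥ 2: C(n) = [n] ++ C(n-1) ++ [n] ++ C(n-1) ++ [n] and S(n) = S(n-1) ++ C(n). Then the length of S(n) is 6·2^n - 3n - 6 for all n ≥ 1. -/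
/-! Each core block `C n` consists of two copies of `C (n - 1)` and three markers, so its length
`c n` satisfies `c n + 3 = 2 (c (n - 1) + 3)`, i.e. `c n + 3 = 3 · 2 ^ n`. Summing the core blocks,
`|S n| = Σ_{k ≤ n} (3 · 2 ^ k - 3) = 6 · 2 ^ n - 3 n - 6`. Both identities are stated additively
to avoid truncated subtraction. -/

theorem length_core_add_three {C : ℕ → List ℕ} (hC1 : C 1 = [1, 1, 1])
    (hCrec : ∀ n, 2 ≤ n → C n = [n] ++ C (n - 1) ++ [n] ++ C (n - 1) ++ [n]) :
    ∀ n, 1 ≤ n → (C n).length + 3 = 3 * 2 ^ n := by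
  intro n hn
  induction n, hn using Nat.le_induction with
  | base => simp [hC1]
  | succ m hm ih =>
    rw [hCrec (m + 1) (by omega), Nat.add_sub_cancel]
    simp only [List.length_append, List.length_singleton]
    rw [pow_succ]
    omega

theorem length_full_add {S C : ℕ → List ℕ} (hS1 : S 1 = [1, 1, 1])
    (hSrec : ∀ n, 2 ≤ n → S n = S (n - 1) ++ C n)
    (hClen : ∀ n, 1 ≤ n → (C n).length + 3 = 3 * 2 ^ n) :
    ∀ n, 1 ≤ n → (S n).length + 3 * n + 6 = 6 * 2 ^ n := by
  intro n hn
  induction n, hn using Nat.le_induction with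
  | base => simp [hS1]
  | succ m hm ih =>
    rw [hSrec (m + 1) (by omega), Nat.add_sub_cancel, List.length_append]
    have hCm := hClen (m + 1) (by omega)
    rw [pow_succ] at hCm ⊢
    omega

theorem shortest_ziggu_change_sequence_length (S C : ℕ → List ℕ)
    (hS1 : S 1 = [1, 1, 1]) (hC1 : C 1 = [1, 1, 1])
    (hCrec : ∀ n, 2 ≤ n → C n = [n] ++ C (n - 1) ++ [n] ++ C (n - 1) ++ [n])
    (hSrec : ∀ n, 2 ≤ n → S n = S (n - 1) ++ C n) :
    ∀ n, 1 ≤ n → (S n).length = 6 * 2 ^ n - 3 * n - 6 := by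
  intro n hn
  have h := length_full_add hS1 hSrec (length_core_add_three hC1 hCrec) n hn
  omega
end

section
/- Successive entries in the shortest Ziggu change sequence S(n) differ by at most one ('stair-climbing property'): for any two adjacent entries a, b in S(n), |a - b| ≤ 1. -/
/-! The blocks `C n` start and end with `n`, so every seam in `C (n + 1)` and the seam between
`S n` and `C (n + 1)` join `n` with `n + 1`. -/

def StairStep (a b : ℕ) : Prop := |(a : ℤ) - b| ≤ 1

theorem stairStep_self (n : ℕ) : StairStep n n := by
  simp [StairStep]

theorem stairStep_succ_right (n : ℕ) : StairStep n (n + 1) := by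
  simp [StairStep]

theorem stairStep_succ_left (n : ℕ) : StairStep (n + 1) n := by
  simp [StairStep]

section Ziggu

variable {S C : ℕ → List ℕ} (hC1 : C 1 = [1, 1, 1])
  (hCrec : ∀ n, 2 ≤ n → C n = [n] ++ C (n - 1) ++ [n] ++ C (n - 1) ++ [n])
include hC1 hCrec

theorem zigguBlock_head?_eq {n : ℕ} (hn : 1 ≤ n) : (C n).head? = some n := by
  obtain rfl | hn := hn.eq_or_lt
  · simp [hC1]
  · simp [hCrec n hn]

theorem zigguBlock_getLast?_eq {n : ℕ} (hn : 1 ≤ n) : (C n).getLast? = some n := by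
  obtain rfl | hn := hn.eq_or_lt
  · simp [hC1]
  · simp [hCrec n hn, List.getLast?_cons, List.getLast?_append]

theorem zigguBlock_isChain {n : ℕ} (hn : 1 ≤ n) : (C n).IsChain StairStep := by
  induction n, hn using Nat.le_induction with
  | base => simp [hC1, stairStep_self]
  | succ n hn ih =>
    have hhead := zigguBlock_head?_eq hC1 hCrec hn
    have hlast := zigguBlock_getLast?_eq hC1 hCrec hn
    rw [hCrec (n + 1) (by omega), Nat.add_sub_cancel]
    refine (((ih.cons ?_).append (.singleton _) ?_).append ih ?_).append (.singleton _) ?_ <;>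
      simp [hhead, hlast, List.getLast?_cons, List.getLast?_append, stairStep_succ_right,
        stairStep_succ_left]

variable (hS1 : S 1 = [1, 1, 1]) (hSrec : ∀ n, 2 ≤ n → S n = S (n - 1) ++ C n)
include hS1 hSrec

theorem zigguSeq_getLast?_eq {n : ℕ} (hn : 1 ≤ n) : (S n).getLast? = some n := by
  obtain rfl | hn := hn.eq_or_lt
  · simp [hS1]
  · simp [hSrec n hn, List.getLast?_append, zigguBlock_getLast?_eq hC1 hCrec hn.le]

theorem zigguSeq_isChain {n : ℕ} (hn : 1 ≤ n) : (S n).IsChain StairStep := by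
  induction n, hn using Nat.le_induction with
  | base => simp [hS1, stairStep_self]
  | succ n hn ih =>
    rw [hSrec (n + 1) (by omega), Nat.add_sub_cancel]
    refine ih.append (zigguBlock_isChain hC1 hCrec (by omega)) ?_
    simp [zigguSeq_getLast?_eq hC1 hCrec hS1 hSrec hn,
      zigguBlock_head?_eq hC1 hCrec (by omega : 1 ≤ n + 1),
      stairStep_succ_right]

end Ziggu

theorem shortest_ziggu_stair_climbing (S C : ℕ → List ℕ)
    (hS1 : S 1 = [1, 1, 1]) (hC1 : C 1 = [1, 1, 1])
    (hCrec : ∀ n, 2 ≤ n → C n = [n] ++ C (n - 1) ++ [n] ++ C (n - 1) ++ [n])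
    (hSrec : ∀ n, 2 ≤ n → S n = S (n - 1) ++ C n) :
    ∀ n, 1 ≤ n → List.Chain' (fun a b => |(a : ℤ) - (b : ℤ)| ≤ 1) (S n) := by
  intro n hn
  -- the statement chains the image of `S n` in `List ℤ`, elaborated as `S n >>= pure ∘ (↑)`
  rw [List.Chain', List.bind_eq_flatMap]
  simp only [List.pure_def, ← List.map_eq_flatMap, List.isChain_map]
  exact zigguSeq_isChain hC1 hCrec hS1 hSrec hn
end

section
/- The number of 2×n Nurikabe grids is 6·2^n - 3n - 5 for all n ≥ 0. -/
/-- Orthogonal adjacency of cells in a `2 × n` grid. -/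
def GridAdj {n : ℕ} (a b : Fin 2 × Fin n) : Prop :=
  (a.1 = b.1 ∧ (a.2.val + 1 = b.2.val ∨ b.2.val + 1 = a.2.val)) ∨
  (a.2 = b.2 ∧ a.1 ≠ b.1)

/-- A `2 × n` Nurikabe grid: the black cells (`c i j = true`) are edge-connected and
no `2 × 2` subgrid is entirely black. -/
def IsNurikabe {n : ℕ} (c : Fin 2 → Fin n → Bool) : Prop :=
  (∀ a b : Fin 2 × Fin n, c a.1 a.2 = true → c b.1 b.2 = true →
    Relation.ReflTransGen (fun x y => GridAdj x y ∧ c y.1 y.2 = true) a b) ∧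
  (∀ j : Fin n, ∀ h : j.val + 1 < n,
    ¬(c 0 j = true ∧ c 1 j = true ∧ c 0 ⟨j.val + 1, h⟩ = true ∧ c 1 ⟨j.val + 1, h⟩ = true))

/-!
Read a colouring as the word of its columns. It is Nurikabe exactly when the occupied columns
form an interval and any two adjacent occupied columns share a black row without both being
full: a black path can only pass from one column to the next along a row, and conversely such
a strip is connected row by row. Every occupied column is compatible with exactly two occupied
columns, so prepending a column gives `P (n + 1) = 2 P n + 2` and `N (n + 1) = N n + 2 P n + 1`,
where `N n` counts the valid words of length `n` and `P n` those whose occupied columns form a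
prefix. Hence `P n = 3 * 2 ^ n - 2` and `N n = 6 * 2 ^ n - 3 n - 5`.
-/

theorem Relation.ReflTransGen.exists_exit {α : Type*} {r : α → α → Prop} {p : α → Prop}
    {a b : α} (h : Relation.ReflTransGen r a b) (ha : p a) (hb : ¬ p b) :
    ∃ x y, Relation.ReflTransGen r a x ∧ r x y ∧ p x ∧ ¬ p y := by
  induction h with
  | refl => exact absurd ha hb
  | @tail b c hab hbc ih =>
    by_cases hpb : p b
    · exact ⟨b, c, hab, hbc, hpb, hb⟩
    · exact ih hpb

theorem Nat.card_subtype_fin_succ {α : Type*} [Fintype α] {n : ℕ}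
    (P : (Fin (n + 1) → α) → Prop) :
    Nat.card {w // P w} = ∑ w : Fin n → α, Nat.card {x // P (Matrix.vecCons x w)} := by
  rw [← Nat.card_sigma]
  refine Nat.card_congr ((Equiv.subtypeEquiv ((Fin.consEquiv fun _ => α).symm.trans
    (Equiv.prodComm _ _)) fun w => ?_).trans
      (Equiv.subtypeProdEquivSigmaSubtype fun w x => P (Matrix.vecCons x w)))
  simp [Fin.consEquiv, Matrix.vecCons]

theorem Fintype.sum_ite_eq_mul_natCard {α : Type*} [Fintype α] (p : α → Prop)
    [DecidablePred p] (c : ℕ) :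
    ∑ a, (if p a then c else 0) = c * Nat.card {a // p a} := by
  rw [Nat.card_eq_fintype_card, Fintype.card_subtype, Finset.sum_ite, Finset.sum_const_zero,
    Finset.sum_const, smul_eq_mul, add_zero, mul_comm]

namespace Nurikabe

abbrev Column := Fin 2 → Bool

namespace Column

def Occupied (x : Column) : Prop := ∃ r, x r = true

def Compatible (x y : Column) : Prop :=
  (∃ r, x r = true ∧ y r = true) ∧ ¬ ∀ r, x r = true ∧ y r = true

instance : DecidablePred Occupied := fun x => inferInstanceAs (Decidable (∃ r, x r = true))

instance (x y : Column) : Decidable (Compatible x y) := inferInstanceAs (Decidable (_ ∧ _))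

theorem card_not_occupied : Nat.card {x : Column // ¬ x.Occupied} = 1 := by
  rw [Nat.card_eq_fintype_card]; decide

theorem card_occupied_compatible {y : Column} (hy : y.Occupied) :
    Nat.card {x : Column // x.Occupied ∧ x.Compatible y} = 2 := by
  rw [Nat.card_eq_fintype_card]; revert y; decide

theorem card_occupied_imp_compatible {y : Column} (hy : y.Occupied) :
    Nat.card {x : Column // x.Occupied → x.Compatible y} = 3 := by
  rw [Nat.card_eq_fintype_card]; revert y; decide

end Column

open Column Matrix Relation

section Words

variable {n : ℕ}

def OccupiedConvex (w : Fin n → Column) : Prop :=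
  ∀ i j k, i ≤ j → j ≤ k → (w i).Occupied → (w k).Occupied → (w j).Occupied

def OccupiedPrefix (w : Fin n → Column) : Prop :=
  ∀ j k, j ≤ k → (w k).Occupied → (w j).Occupied

def AdjCompatible (w : Fin n → Column) : Prop :=
  ∀ i j : Fin n, i.val + 1 = j.val → (w i).Occupied → (w j).Occupied →
    (w i).Compatible (w j)

def IsValid (w : Fin n → Column) : Prop := OccupiedConvex w ∧ AdjCompatible w

def IsBlank (w : Fin n → Column) : Prop := ∀ j, ¬ (w j).Occupied

instance : DecidablePred (@IsValid n) := fun w => by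
  unfold IsValid OccupiedConvex AdjCompatible; infer_instance

instance : DecidablePred (@OccupiedPrefix n) := fun w => by
  unfold OccupiedPrefix; infer_instance

instance : DecidablePred (@IsBlank n) := fun w => by
  unfold IsBlank; infer_instance

theorem IsBlank.occupiedPrefix {w : Fin n → Column} (h : IsBlank w) : OccupiedPrefix w :=
  fun _ k _ hk => absurd hk (h k)

theorem IsBlank.isValid {w : Fin n → Column} (h : IsBlank w) : IsValid w :=
  ⟨fun i _ _ _ _ hi => absurd hi (h i), fun i _ _ hi => absurd hi (h i)⟩

theorem OccupiedPrefix.occupied_zero {w : Fin n → Column} (hp : OccupiedPrefix w)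
    (hb : ¬ IsBlank w) : ∃ h : 0 < n, (w ⟨0, h⟩).Occupied := by
  obtain ⟨k, hk⟩ := not_forall_not.1 hb
  exact ⟨k.pos, hp _ k (Nat.zero_le _) hk⟩

theorem card_isBlank : Nat.card {w : Fin n → Column // IsBlank w} = 1 := by
  have hblank : ∀ w : Fin n → Column, IsBlank w ↔ w = fun _ _ => false := by
    have hcol : ∀ x : Column, ¬ x.Occupied ↔ x = fun _ => false := by decide
    simp [IsBlank, hcol, funext_iff]
  rw [Nat.card_congr (Equiv.subtypeEquivRight hblank), Nat.card_unique]

variable (x : Column) (w : Fin n → Column)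

theorem occupiedConvex_cons :
    OccupiedConvex (vecCons x w) ↔
      OccupiedConvex w ∧ (x.Occupied → OccupiedPrefix w) := by
  simp only [OccupiedConvex, Fin.forall_fin_succ, nonpos_iff_eq_zero, Matrix.cons_val_zero,
    Matrix.cons_val_succ, imp_self, implies_true, zero_le, forall_const, true_and,
    Fin.succ_ne_zero, IsEmpty.forall_iff, Fin.succ_le_succ_iff, OccupiedPrefix]
  tauto

theorem occupiedPrefix_cons :
    OccupiedPrefix (vecCons x w) ↔
      OccupiedPrefix w ∧ (x.Occupied ∨ IsBlank w) := by
  simp only [OccupiedPrefix, Fin.forall_fin_succ, nonpos_iff_eq_zero, Matrix.cons_val_zero,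
    Matrix.cons_val_succ, imp_self, zero_le, forall_const, true_and, Fin.succ_ne_zero,
    IsEmpty.forall_iff, Fin.succ_le_succ_iff, IsBlank]
  grind

theorem isValid_cons :
    IsValid (vecCons x w) ↔
      IsValid w ∧ (x.Occupied → OccupiedPrefix w) ∧
        ∀ j : Fin n, j.val = 0 → x.Occupied → (w j).Occupied → x.Compatible (w j) := by
  have hadj : AdjCompatible (vecCons x w) ↔ AdjCompatible w ∧
      ∀ j : Fin n, j.val = 0 → x.Occupied → (w j).Occupied → x.Compatible (w j) := by
    simp only [AdjCompatible, Fin.forall_fin_succ, Matrix.cons_val_zero, Matrix.cons_val_succ,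
      Fin.val_zero, Fin.val_succ, Nat.add_right_cancel_iff, add_eq_zero, one_ne_zero, and_false,
      IsEmpty.forall_iff, true_and, eq_comm (a := 0)]
    exact and_comm
  rw [IsValid, IsValid, occupiedConvex_cons, hadj]
  tauto

theorem card_cons_isValid :
    Nat.card {x // IsValid (vecCons x w)} =
      (if IsValid w then 1 else 0) + (if IsValid w ∧ OccupiedPrefix w then 2 else 0) +
        (if IsBlank w then 1 else 0) := by
  by_cases hv : IsValid w
  swap
  · have : IsEmpty {x // IsValid (vecCons x w)} :=
      ⟨fun x => hv ((isValid_cons x.1 w).1 x.2).1⟩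
    simp [hv, mt IsBlank.isValid hv]
  by_cases hb : IsBlank w
  · have hall : ∀ x, IsValid (vecCons x w) := fun x =>
      (isValid_cons x w).2 ⟨hv, fun _ => hb.occupiedPrefix, fun j _ _ hj => absurd hj (hb j)⟩
    rw [Nat.card_congr (Equiv.subtypeUnivEquiv hall)]
    simp [hv, hb, hb.occupiedPrefix]
  by_cases hp : OccupiedPrefix w
  · obtain ⟨h0, hhead⟩ := hp.occupied_zero hb
    have hiff : ∀ x, IsValid (vecCons x w) ↔
        (x.Occupied → x.Compatible (w ⟨0, h0⟩)) := fun x => by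
      rw [isValid_cons]
      exact ⟨fun h hx => h.2.2 _ rfl hx hhead, fun h => ⟨hv, fun _ => hp, fun j hj hx _ =>
        (Fin.ext hj : j = ⟨0, h0⟩) ▸ h hx⟩⟩
    rw [Nat.card_congr (Equiv.subtypeEquivRight hiff), card_occupied_imp_compatible hhead]
    simp [hv, hb, hp]
  · have hiff : ∀ x, IsValid (vecCons x w) ↔ ¬ x.Occupied := fun x => by
      rw [isValid_cons]
      exact ⟨fun h hx => hp (h.2.1 hx),
        fun hx => ⟨hv, fun h => absurd h hx, fun _ _ h => absurd h hx⟩⟩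
    rw [Nat.card_congr (Equiv.subtypeEquivRight hiff), card_not_occupied]
    simp [hv, hb, hp]

theorem card_cons_isValid_occupiedPrefix :
    Nat.card {x // IsValid (vecCons x w) ∧ OccupiedPrefix (vecCons x w)} =
      (if IsValid w ∧ OccupiedPrefix w then 2 else 0) + (if IsBlank w then 2 else 0) := by
  by_cases hvp : IsValid w ∧ OccupiedPrefix w
  swap
  · have : IsEmpty {x // IsValid (vecCons x w) ∧ OccupiedPrefix (vecCons x w)} :=
      ⟨fun x => hvp ⟨((isValid_cons x.1 w).1 x.2.1).1,
        ((occupiedPrefix_cons x.1 w).1 x.2.2).1⟩⟩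
    simpa [hvp] using fun h : IsBlank w => hvp ⟨h.isValid, h.occupiedPrefix⟩
  obtain ⟨hv, hp⟩ := hvp
  by_cases hb : IsBlank w
  · have hall : ∀ x, IsValid (vecCons x w) ∧ OccupiedPrefix (vecCons x w) := fun x =>
      ⟨(isValid_cons x w).2 ⟨hv, fun _ => hp, fun j _ _ hj => absurd hj (hb j)⟩,
        (occupiedPrefix_cons x w).2 ⟨hp, Or.inr hb⟩⟩
    rw [Nat.card_congr (Equiv.subtypeUnivEquiv hall)]
    simp [hv, hb, hp]
  obtain ⟨h0, hhead⟩ := hp.occupied_zero hb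
  have hiff : ∀ x, IsValid (vecCons x w) ∧ OccupiedPrefix (vecCons x w) ↔
      x.Occupied ∧ x.Compatible (w ⟨0, h0⟩) := fun x => by
    rw [isValid_cons, occupiedPrefix_cons, or_iff_left hb]
    exact ⟨fun h => ⟨h.2.2, h.1.2.2 _ rfl h.2.2 hhead⟩, fun h => ⟨⟨hv, fun _ => hp,
      fun j hj _ _ => (Fin.ext hj : j = ⟨0, h0⟩) ▸ h.2⟩, hp, h.1⟩⟩
  rw [Nat.card_congr (Equiv.subtypeEquivRight hiff), card_occupied_compatible hhead]
  simp [hv, hb, hp]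

end Words

theorem card_isValid_occupiedPrefix (n : ℕ) :
    Nat.card {w : Fin n → Column // IsValid w ∧ OccupiedPrefix w} = 3 * 2 ^ n - 2 := by
  induction n with
  | zero =>
    have hall : ∀ w : Fin 0 → Column, IsValid w ∧ OccupiedPrefix w := fun w =>
      ⟨⟨fun i => i.elim0, fun i => i.elim0⟩, fun i => i.elim0⟩
    rw [Nat.card_congr (Equiv.subtypeUnivEquiv hall), Nat.card_unique]
    rfl
  | succ n ih =>
    rw [Nat.card_subtype_fin_succ, Fintype.sum_congr _ _ card_cons_isValid_occupiedPrefix,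
      Finset.sum_add_distrib, Fintype.sum_ite_eq_mul_natCard, Fintype.sum_ite_eq_mul_natCard,
      ih, card_isBlank, pow_succ]
    have := Nat.one_le_two_pow (n := n)
    omega

theorem card_isValid (n : ℕ) :
    Nat.card {w : Fin n → Column // IsValid w} = 6 * 2 ^ n - 3 * n - 5 := by
  induction n with
  | zero =>
    have hall : ∀ w : Fin 0 → Column, IsValid w := fun w =>
      ⟨fun i => i.elim0, fun i => i.elim0⟩
    rw [Nat.card_congr (Equiv.subtypeUnivEquiv hall), Nat.card_unique]
    rfl
  | succ n ih =>
    rw [Nat.card_subtype_fin_succ, Fintype.sum_congr _ _ card_cons_isValid,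
      Finset.sum_add_distrib, Finset.sum_add_distrib, Fintype.sum_ite_eq_mul_natCard,
      Fintype.sum_ite_eq_mul_natCard, Fintype.sum_ite_eq_mul_natCard, ih,
      card_isValid_occupiedPrefix, card_isBlank, pow_succ]
    have := Nat.lt_two_pow_self (n := n)
    omega

section Grid

variable {n : ℕ} {c : Fin 2 → Fin n → Bool}

theorem gridAdj_comm {a b : Fin 2 × Fin n} : GridAdj a b ↔ GridAdj b a := by
  unfold GridAdj; grind

def BlackAdj (c : Fin 2 → Fin n → Bool) (a b : Fin 2 × Fin n) : Prop :=
  GridAdj a b ∧ c a.1 a.2 = true ∧ c b.1 b.2 = true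

instance : Std.Symm (BlackAdj c) :=
  ⟨fun _ _ ⟨hab, ha, hb⟩ => ⟨gridAdj_comm.1 hab, hb, ha⟩⟩

theorem black_of_reflTransGen {a b : Fin 2 × Fin n}
    (h : ReflTransGen (fun x y => GridAdj x y ∧ c y.1 y.2 = true) a b)
    (ha : c a.1 a.2 = true) : c b.1 b.2 = true := by
  rcases h.cases_tail with rfl | ⟨_, _, -, hb⟩
  exacts [ha, hb]

/-- The path has to leave the columns `≤ j`, and only a horizontal step from `j` does so. -/
theorem exists_row_black_of_reflTransGen {a b : Fin 2 × Fin n}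
    (h : ReflTransGen (fun x y => GridAdj x y ∧ c y.1 y.2 = true) a b)
    (ha : c a.1 a.2 = true) {j k : Fin n} (hjk : j.val + 1 = k.val) (haj : a.2 ≤ j)
    (hkb : k ≤ b.2) : ∃ r, c r j = true ∧ c r k = true := by
  obtain ⟨x, y, hax, ⟨hxy, hy⟩, hxj, hyj⟩ :=
    h.exists_exit (p := fun z => z.2 ≤ j) haj (by rw [Fin.le_def] at hkb ⊢; omega)
  have hx := black_of_reflTransGen hax ha
  simp only [Fin.le_def, not_le] at hxj hyj
  rcases hxy with ⟨hrow, hcol | hcol⟩ | ⟨hcol, -⟩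
  · obtain rfl : x.2 = j := Fin.ext (by omega)
    obtain rfl : y.2 = k := Fin.ext (by omega)
    exact ⟨x.1, hx, hrow ▸ hy⟩
  · omega
  · rw [hcol] at hxj; omega

theorem isValid_of_isNurikabe (h : IsNurikabe c) : IsValid (fun j r => c r j) := by
  obtain ⟨hconn, hsquare⟩ := h
  refine ⟨fun i j k hij hjk ⟨r, hr⟩ ⟨s, hs⟩ => ?_,
    fun i j hij ⟨r, hr⟩ ⟨s, hs⟩ => ⟨?_, ?_⟩⟩
  · rcases hjk.eq_or_lt with rfl | hjk
    · exact ⟨s, hs⟩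
    · obtain ⟨t, ht, -⟩ := exists_row_black_of_reflTransGen (hconn (r, i) (s, k) hr hs) hr
        (k := ⟨j + 1, by omega⟩) rfl hij (Fin.le_def.2 (by simpa using hjk))
      exact ⟨t, ht⟩
  · exact exists_row_black_of_reflTransGen (hconn (r, i) (s, j) hr hs) hr hij le_rfl le_rfl
  · refine fun hfull => hsquare i (by omega) ?_
    rw [show (⟨i + 1, _⟩ : Fin n) = j from Fin.ext hij]
    exact ⟨(hfull 0).1, (hfull 1).1, (hfull 0).2, (hfull 1).2⟩

theorem blackAdj_reflTransGen_of_same_column {r s : Fin 2} {j : Fin n} (hr : c r j = true)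
    (hs : c s j = true) : ReflTransGen (BlackAdj c) (r, j) (s, j) := by
  by_cases hrs : r = s
  · rw [hrs]
  · exact .single ⟨Or.inr ⟨rfl, hrs⟩, hr, hs⟩

theorem blackAdj_reflTransGen_of_le (hv : IsValid (fun j r => c r j)) {a : Fin 2 × Fin n}
    (ha : c a.1 a.2 = true) {m : ℕ} (ham : a.2.val ≤ m) :
    ∀ (hm : m < n) (s : Fin 2), c s ⟨m, hm⟩ = true →
      ReflTransGen (BlackAdj c) a (s, ⟨m, hm⟩) := by
  induction m, ham using Nat.le_induction with
  | base => exact fun _ s hs => blackAdj_reflTransGen_of_same_column ha hs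
  | succ m ham ih =>
    intro hm s hs
    have hocc : Occupied fun r => c r ⟨m, by omega⟩ :=
      hv.1 a.2 ⟨m, by omega⟩ ⟨m + 1, hm⟩ ham (Nat.le_succ m) ⟨a.1, ha⟩ ⟨s, hs⟩
    obtain ⟨⟨t, htm, ht⟩, -⟩ := hv.2 ⟨m, by omega⟩ ⟨m + 1, hm⟩ rfl hocc ⟨s, hs⟩
    have hstep : BlackAdj c (t, ⟨m, by omega⟩) (t, ⟨m + 1, hm⟩) :=
      ⟨Or.inl ⟨rfl, Or.inl rfl⟩, htm, ht⟩
    exact ((ih (by omega) t htm).tail hstep).trans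
      (blackAdj_reflTransGen_of_same_column ht hs)

theorem isNurikabe_of_isValid (hv : IsValid (fun j r => c r j)) : IsNurikabe c := by
  refine ⟨fun a b ha hb => ?_, fun j hj ⟨h0, h1, h0', h1'⟩ => ?_⟩
  · suffices ReflTransGen (BlackAdj c) a b from
      ReflTransGen.mono (fun _ _ h => ⟨h.1, h.2.2⟩) _ _ this
    rcases le_total a.2 b.2 with hab | hba
    · exact blackAdj_reflTransGen_of_le hv ha hab b.2.isLt b.1 hb
    · exact symm_of _ (blackAdj_reflTransGen_of_le hv hb hba a.2.isLt a.1 ha)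
  · exact (hv.2 j ⟨j + 1, hj⟩ rfl ⟨0, h0⟩ ⟨0, h0'⟩).2
      (Fin.forall_fin_two.2 ⟨⟨h0, h0'⟩, ⟨h1, h1'⟩⟩)

theorem isNurikabe_iff_isValid : IsNurikabe c ↔ IsValid (fun j r => c r j) :=
  ⟨isValid_of_isNurikabe, isNurikabe_of_isValid⟩

end Grid

end Nurikabe

theorem nurikabe_count (n : ℕ) :
    Nat.card {c : Fin 2 → Fin n → Bool // IsNurikabe c} = 6 * 2 ^ n - 3 * n - 5 := by
  rw [← Nurikabe.card_isValid n]
  exact Nat.card_congr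
    (Equiv.subtypeEquiv (Equiv.piComm _) fun _ => Nurikabe.isNurikabe_iff_isValid)
end

section
/- The number of 2×n grid colorings in black and white in which the black cells are edge-connected, no 2×2 subgrid is all black, and every one of the n columns contains at least one black cell, equals 3·2^{n-1} for all n ≥ 1. -/
namespace NK

/- ## state machine -/
abbrev St := Bool × Bool

def ok (p : St) : Prop := (p.1 || p.2) = true

instance : DecidablePred ok := fun _ => inferInstanceAs (Decidable (_ = true))

def allowed (p q : St) : Prop :=
  ¬(p = (true, true) ∧ q = (true, true)) ∧
    ((p.1 = true ∧ q.1 = true) ∨ (p.2 = true ∧ q.2 = true))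

instance : ∀ p q : St, Decidable (allowed p q) := fun _ _ =>
  inferInstanceAs (Decidable (_ ∧ _))

def step (p : St) (b : Bool) : St :=
  if p = (true, true) then (if b then (false, true) else (true, false))
  else if b then (true, true) else p

def bit (p q : St) : Bool :=
  if p = (true, true) then q.2 else q.1 && q.2

lemma ok_step : ∀ (p : St) (b : Bool), ok p → ok (step p b) := by decide
lemma allowed_step : ∀ (p : St) (b : Bool), ok p → allowed p (step p b) := by decide
lemma bit_step : ∀ (p : St) (b : Bool), ok p → bit p (step p b) = b := by decide
lemma step_bit : ∀ p q : St, ok p → ok q → allowed p q → step p (bit p q) = q := by decide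

def seq (p : St) (f : ℕ → Bool) : ℕ → St
  | 0 => p
  | j + 1 => step (seq p f j) (f j)

lemma ok_seq (p : St) (f : ℕ → Bool) (hp : ok p) : ∀ j, ok (seq p f j)
  | 0 => hp
  | j + 1 => ok_step _ _ (ok_seq p f hp j)

/- ## grid connectivity -/

lemma gridAdj_symm {n : ℕ} {a b : Fin 2 × Fin n} (h : GridAdj a b) : GridAdj b a := by
  rcases h with ⟨h1, h2⟩ | ⟨h1, h2⟩
  · exact Or.inl ⟨h1.symm, h2.elim Or.inr Or.inl⟩
  · exact Or.inr ⟨h1.symm, h2.symm⟩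

section Grid

def Conn {n : ℕ} (c : Fin 2 → Fin n → Bool) : Fin 2 × Fin n → Fin 2 × Fin n → Prop :=
  Relation.ReflTransGen (fun x y => GridAdj x y ∧ c y.1 y.2 = true)

variable {n : ℕ} {c : Fin 2 → Fin n → Bool}

lemma black_of_conn {a b : Fin 2 × Fin n} (h : Conn c a b) (ha : c a.1 a.2 = true) :
    c b.1 b.2 = true := by
  induction h with
  | refl => exact ha
  | tail _ hs _ => exact hs.2

lemma conn_symm {a b : Fin 2 × Fin n} (ha : c a.1 a.2 = true) (h : Conn c a b) : Conn c b a := by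
  induction h with
  | refl => exact .refl
  | tail hp hs ih =>
    exact Relation.ReflTransGen.head ⟨gridAdj_symm hs.1, black_of_conn hp ha⟩ ih

lemma cross {a b : Fin 2 × Fin n} (h : Conn c a b) (ha : c a.1 a.2 = true) (j : ℕ)
    (hj : a.2.val ≤ j) :
    c b.1 b.2 = true ∧ (j < b.2.val → ∃ (i : Fin 2) (h1 : j < n) (h2 : j + 1 < n),
      c i ⟨j, h1⟩ = true ∧ c i ⟨j + 1, h2⟩ = true) := by
  induction h with
  | refl => exact ⟨ha, fun hlt => absurd hlt (by omega)⟩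
  | @tail y b hp hs ih =>
    refine ⟨hs.2, fun hlt => ?_⟩
    obtain ⟨hy, hcr⟩ := ih
    by_cases hyj : j < y.2.val
    · exact hcr hyj
    · push_neg at hyj
      rcases hs.1 with ⟨hr, hcol | hcol⟩ | ⟨hcol, _⟩
      · have h1 : j < n := by omega
        have h2 : j + 1 < n := by
          have := b.2.isLt; omega
        have hy2 : y.2 = ⟨j, h1⟩ := Fin.ext (show y.2.val = j by omega)
        have hb2 : b.2 = ⟨j + 1, h2⟩ := Fin.ext (show b.2.val = j + 1 by omega)
        exact ⟨y.1, h1, h2, hy2 ▸ hy, by rw [hr]; exact hb2 ▸ hs.2⟩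
      · omega
      · have := congrArg Fin.val hcol; omega

lemma samecol {a b : Fin 2 × Fin n} (h2 : a.2 = b.2) (hb : c b.1 b.2 = true) : Conn c a b := by
  by_cases h1 : a.1 = b.1
  · have : a = b := Prod.ext h1 h2
    exact this ▸ .refl
  · exact .single ⟨Or.inr ⟨h2, h1⟩, hb⟩

lemma reach (hsh : ∀ (j : ℕ) (h : j + 1 < n), ∃ i : Fin 2,
      c i ⟨j, Nat.lt_of_succ_lt h⟩ = true ∧ c i ⟨j + 1, h⟩ = true) :
    ∀ (d : ℕ) (a b : Fin 2 × Fin n), c a.1 a.2 = true → c b.1 b.2 = true →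
      b.2.val = a.2.val + d → Conn c a b := by
  intro d
  induction d with
  | zero => exact fun a b _ hb he => samecol (Fin.ext (by omega)) hb
  | succ d ih =>
    intro a b ha hb he
    have h2 : a.2.val + 1 < n := by have := b.2.isLt; omega
    obtain ⟨i, hi1, hi2⟩ := hsh a.2.val h2
    have step1 : Conn c a (i, a.2) := samecol rfl hi1
    have step2 : Conn c (i, a.2) (i, (⟨a.2.val + 1, h2⟩ : Fin n)) :=
      .single ⟨Or.inl ⟨rfl, Or.inl rfl⟩, hi2⟩
    exact (step1.trans step2).trans (ih _ b hi2 hb (show b.2.val = a.2.val + 1 + d by omega))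

/- ## column view -/

def colN (c : Fin 2 → Fin n → Bool) (j : ℕ) (h : j < n) : St :=
  (c 0 ⟨j, h⟩, c 1 ⟨j, h⟩)

def Good (c : Fin 2 → Fin n → Bool) : Prop :=
  (∀ (j : ℕ) (h : j < n), ok (colN c j h)) ∧
  (∀ (j : ℕ) (h : j + 1 < n), allowed (colN c j (Nat.lt_of_succ_lt h)) (colN c (j + 1) h))

lemma mem_iff_good :
    (IsNurikabe c ∧ ∀ j : Fin n, c 0 j = true ∨ c 1 j = true) ↔ Good c := by
  constructor
  · rintro ⟨⟨hconn, h2x2⟩, hne⟩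
    constructor
    · intro j h
      simpa [ok, colN, Bool.or_eq_true] using hne ⟨j, h⟩
    · intro j h
      constructor
      · have := h2x2 ⟨j, Nat.lt_of_succ_lt h⟩ h
        simp only [colN, Prod.mk.injEq]
        tauto
      · -- use connectivity to get a shared row
        obtain ha := hne ⟨j, Nat.lt_of_succ_lt h⟩
        obtain hb := hne ⟨j + 1, h⟩
        have key : ∃ a : Fin 2 × Fin n, a.2 = ⟨j, Nat.lt_of_succ_lt h⟩ ∧ c a.1 a.2 = true := by
          rcases ha with ha | ha
          · exact ⟨(0, ⟨j, _⟩), rfl, ha⟩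
          · exact ⟨(1, ⟨j, _⟩), rfl, ha⟩
        have keyb : ∃ b : Fin 2 × Fin n, b.2 = ⟨j + 1, h⟩ ∧ c b.1 b.2 = true := by
          rcases hb with hb | hb
          · exact ⟨(0, ⟨j + 1, h⟩), rfl, hb⟩
          · exact ⟨(1, ⟨j + 1, h⟩), rfl, hb⟩
        obtain ⟨a, ha2, hab⟩ := key
        obtain ⟨b, hb2, hbb⟩ := keyb
        have hpath := hconn a b hab hbb
        have hcr := (cross hpath hab j (by simp [ha2])).2
          (by simp [hb2])
        obtain ⟨i, h1, h2', hc1, hc2⟩ := hcr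
        simp only [colN]
        fin_cases i
        · exact Or.inl ⟨hc1, hc2⟩
        · exact Or.inr ⟨hc1, hc2⟩
  · rintro ⟨hok, hall⟩
    have hne : ∀ j : Fin n, c 0 j = true ∨ c 1 j = true := by
      intro j
      have := hok j.val j.isLt
      simpa [ok, colN, Bool.or_eq_true, Fin.eta] using this
    have hsh : ∀ (j : ℕ) (h : j + 1 < n), ∃ i : Fin 2,
        c i ⟨j, Nat.lt_of_succ_lt h⟩ = true ∧ c i ⟨j + 1, h⟩ = true := by
      intro j h
      rcases (hall j h).2 with ⟨u, v⟩ | ⟨u, v⟩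
      · exact ⟨0, u, v⟩
      · exact ⟨1, u, v⟩
    refine ⟨⟨?_, ?_⟩, hne⟩
    · intro a b hab hbb
      rcases le_total a.2.val b.2.val with hle | hle
      · exact reach hsh (b.2.val - a.2.val) a b hab hbb (by omega)
      · exact conn_symm hbb (reach hsh (a.2.val - b.2.val) b a hbb hab (by omega))
    · intro j h hbad
      have := (hall j.val h).1
      apply this
      simp only [colN, Prod.mk.injEq]
      exact ⟨⟨by simpa [Fin.eta] using hbad.1, by simpa [Fin.eta] using hbad.2.1⟩,
        hbad.2.2.1, hbad.2.2.2⟩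

end Grid

/- ## encoding / decoding -/

section Enc

variable {n : ℕ}

def ext (f : Fin (n - 1) → Bool) (k : ℕ) : Bool :=
  if h : k < n - 1 then f ⟨k, h⟩ else false

def decode (x : {p : St // ok p} × (Fin (n - 1) → Bool)) : Fin 2 → Fin n → Bool :=
  fun i j => if i.val = 0 then (seq x.1.val (ext x.2) j.val).1
             else (seq x.1.val (ext x.2) j.val).2

def bits (c : Fin 2 → Fin n → Bool) (k : Fin (n - 1)) : Bool :=
  bit (colN c k.val (by have := k.isLt; omega)) (colN c (k.val + 1) (by have := k.isLt; omega))

lemma colN_decode (x : {p : St // ok p} × (Fin (n - 1) → Bool)) (j : ℕ) (h : j < n) :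
    colN (decode x) j h = seq x.1.val (ext x.2) j := by
  simp [colN, decode]

lemma good_decode (x : {p : St // ok p} × (Fin (n - 1) → Bool)) : Good (decode x) := by
  constructor
  · intro j h
    rw [colN_decode]
    exact ok_seq _ _ x.1.2 j
  · intro j h
    rw [colN_decode, colN_decode]
    exact allowed_step _ _ (ok_seq _ _ x.1.2 j)

lemma card_ok : Nat.card {p : St // ok p} = 3 := by
  rw [Nat.card_eq_fintype_card]; decide

lemma seq_colN (c : Fin 2 → Fin n → Bool) (hg : Good c) (hn : 0 < n) :
    ∀ (j : ℕ) (h : j < n), seq (colN c 0 hn) (ext (bits c)) j = colN c j h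
  | 0, _ => rfl
  | j + 1, h => by
    have h' : j < n := by omega
    have hj' : j < n - 1 := by omega
    show step (seq (colN c 0 hn) (ext (bits c)) j) (ext (bits c) j) = _
    rw [seq_colN c hg hn j h']
    have he : ext (bits c) j = bit (colN c j h') (colN c (j + 1) h) := by
      simp only [ext, dif_pos hj', bits]
    rw [he]
    exact step_bit _ _ (hg.1 j h') (hg.1 (j + 1) h) (hg.2 j h)

end Enc

end NK

theorem nurikabe_full_columns_count (n : ℕ) (hn : 1 ≤ n) :
    Nat.card {c : Fin 2 → Fin n → Bool //
      IsNurikabe c ∧ ∀ j : Fin n, c 0 j = true ∨ c 1 j = true} = 3 * 2 ^ (n - 1) := by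
  have hn0 : 0 < n := hn
  have e : {c : Fin 2 → Fin n → Bool //
      IsNurikabe c ∧ ∀ j : Fin n, c 0 j = true ∨ c 1 j = true} ≃
      ({p : NK.St // NK.ok p} × (Fin (n - 1) → Bool)) :=
    { toFun := fun c =>
        (⟨NK.colN c.val 0 hn0, (NK.mem_iff_good.1 c.property).1 0 hn0⟩, NK.bits c.val)
      invFun := fun x => ⟨NK.decode x, NK.mem_iff_good.2 (NK.good_decode x)⟩
      left_inv := by
        rintro ⟨c, hc⟩
        have hg := NK.mem_iff_good.1 hc
        apply Subtype.ext
        funext i j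
        show (if i.val = 0 then _ else _) = c i j
        rw [NK.seq_colN c hg hn0 j.val j.isLt]
        fin_cases i <;> simp [NK.colN]
      right_inv := by
        rintro ⟨⟨p, hp⟩, f⟩
        have key : ∀ (j : ℕ) (h : j < n),
            NK.colN (NK.decode (⟨p, hp⟩, f)) j h = NK.seq p (NK.ext f) j :=
          fun j h => NK.colN_decode _ j h
        refine Prod.ext ?_ ?_
        · apply Subtype.ext
          exact key 0 hn0
        · funext k
          have hk := k.isLt
          show NK.bit _ _ = f k
          rw [key k.val (by omega), key (k.val + 1) (by omega)]
          show NK.bit _ (NK.step _ (NK.ext f k.val)) = f k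
          rw [NK.bit_step _ _ (NK.ok_seq _ _ hp k.val)]
          simp [NK.ext, dif_pos hk]
    }
  rw [Nat.card_congr e, Nat.card_prod, NK.card_ok, Nat.card_eq_fintype_card]
  simp [Fintype.card_fun]
end

section
/- There is a bijection between the set of 2×n Nurikabe grids and the set of quaternary strings of length n appearing in the shortest Ziggu solution; in particular both sets have cardinality 6·2^n - 3n - 5. -/
/-- The core list of states (strings written as lists of digits, leftmost digit first). -/
def zigguCore : ℕ → List (List ℕ)
  | 0 => []
  | 1 => [[0], [1], [2], [3]]
  | n + 2 =>
      [0 :: List.replicate (n + 1) 3] ++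
      (zigguCore (n + 1)).reverse.map (fun w => 1 :: w) ++
      (zigguCore (n + 1)).map (fun w => 2 :: w) ++
      [List.replicate (n + 2) 3]

/-- The list of states on the shortest solution to a Ziggu puzzle with `n` digits. -/
def zigguShort : ℕ → List (List ℕ)
  | 0 => []
  | 1 => [[0], [1], [2], [3]]
  | n + 2 => (zigguShort (n + 1)).map (fun w => 0 :: w) ++ (zigguCore (n + 2)).tail

/-!
The black cells of a nonempty Nurikabe grid occupy an interval of columns `[l, l + k)`, and
reading the columns of that interval gives a word of length `k` over the three nonempty columns
in which adjacent letters share a black row and are not both full; conversely every such word,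
placed anywhere, is a Nurikabe grid. Each nonempty column has exactly two compatible
predecessors, so there are `3 · 2 ^ (k - 1)` words of length `k`, and summing over the
placements gives `1 + ∑_{l < n} 3 (2 ^ (n - l) - 1) = 6 · 2 ^ n - 3n - 5` grids. The Ziggu list has
the same length by its recursion (its core has length `3 · 2 ^ n - 2`) and no repetitions, so
the bijection comes from equal cardinalities.
-/

theorem length_zigguCore (n : ℕ) : (zigguCore (n + 1)).length + 2 = 3 * 2 ^ (n + 1) := by
  induction n with
  | zero => rfl
  | succ n ih =>
    simp only [zigguCore, List.length_append, List.length_map, List.length_reverse,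
      List.length_singleton, pow_succ] at ih ⊢
    omega

theorem length_zigguShort (n : ℕ) :
    (zigguShort (n + 1)).length + 3 * (n + 1) + 5 = 6 * 2 ^ (n + 1) := by
  induction n with
  | zero => rfl
  | succ n ih =>
    have hcore := length_zigguCore (n + 1)
    simp only [zigguShort, zigguCore, List.length_append, List.length_map, List.length_tail,
      List.length_reverse, List.length_singleton, pow_succ] at ih hcore ⊢
    omega

theorem nodup_zigguCore (n : ℕ) : (zigguCore (n + 1)).Nodup := by
  induction n with
  | zero => decide
  | succ n ih =>
    have h1 := ih.map (List.cons_injective (a := 1))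
    have h2 := ih.map (List.cons_injective (a := 2))
    simp only [zigguCore, List.nodup_append, List.map_reverse, List.nodup_reverse, h1, h2,
      List.replicate_succ]
    aesop

theorem headI_ne_zero_of_mem_tail_zigguCore {n : ℕ} {w : List ℕ}
    (hw : w ∈ (zigguCore (n + 2)).tail) : w.headI ≠ 0 := by
  simp only [zigguCore, List.replicate_succ] at hw
  aesop

theorem nodup_zigguShort (n : ℕ) : (zigguShort (n + 1)).Nodup := by
  induction n with
  | zero => decide
  | succ n ih =>
    rw [zigguShort, List.nodup_append]
    refine ⟨ih.map (List.cons_injective (a := 0)), (nodup_zigguCore (n + 1)).tail, ?_⟩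
    simp only [List.mem_map]
    rintro _ ⟨v, -, rfl⟩ w hw rfl
    exact headI_ne_zero_of_mem_tail_zigguCore hw rfl

namespace GridAdj

variable {n : ℕ} {a b : Fin 2 × Fin n}

theorem symm (h : GridAdj a b) : GridAdj b a := by
  rcases h with ⟨h1, h2⟩ | ⟨h1, h2⟩
  exacts [Or.inl ⟨h1.symm, h2.symm⟩, Or.inr ⟨h1.symm, h2.symm⟩]

theorem col_le_succ (h : GridAdj a b) : b.2.val ≤ a.2.val + 1 := by
  rcases h with ⟨-, h⟩ | ⟨h, -⟩
  · omega
  · simp [h]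

theorem row_eq_of_col_lt (h : GridAdj a b) (hlt : a.2 < b.2) :
    a.1 = b.1 ∧ b.2.val = a.2.val + 1 := by
  rcases h with ⟨h1, h2⟩ | ⟨h1, -⟩
  · exact ⟨h1, by omega⟩
  · exact absurd h1 hlt.ne

end GridAdj

section Paths

open Relation

variable {n : ℕ} {c : Fin 2 → Fin n → Bool}

abbrev BlackStep (c : Fin 2 → Fin n → Bool) (x y : Fin 2 × Fin n) : Prop :=
  GridAdj x y ∧ c y.1 y.2 = true

theorem black_of_reflTransGen {a b : Fin 2 × Fin n} (h : ReflTransGen (BlackStep c) a b)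
    (ha : c a.1 a.2 = true) : c b.1 b.2 = true := by
  induction h with
  | refl => exact ha
  | tail _ hs => exact hs.2

theorem reflTransGen_symm {a b : Fin 2 × Fin n} (h : ReflTransGen (BlackStep c) a b)
    (ha : c a.1 a.2 = true) : ReflTransGen (BlackStep c) b a := by
  induction h with
  | refl => exact .refl
  | tail hp hs ih => exact .head ⟨hs.1.symm, black_of_reflTransGen hp ha⟩ ih

theorem exists_black_of_reflTransGen {a b : Fin 2 × Fin n} (h : ReflTransGen (BlackStep c) a b)
    (ha : c a.1 a.2 = true) {m : Fin n} (ham : a.2 ≤ m) (hmb : m ≤ b.2) :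
    ∃ i, c i m = true := by
  induction h with
  | refl => exact ⟨a.1, le_antisymm ham hmb ▸ ha⟩
  | @tail x y _ hs ih =>
    by_cases hmx : m ≤ x.2
    · exact ih hmx
    · have : y.2 = m := Fin.ext (by have := hs.1.col_le_succ; omega)
      exact ⟨y.1, this ▸ hs.2⟩

theorem exists_row_of_reflTransGen {a b : Fin 2 × Fin n} (h : ReflTransGen (BlackStep c) a b)
    (ha : c a.1 a.2 = true) {j k : Fin n} (hjk : k.val = j.val + 1) (haj : a.2 ≤ j)
    (hkb : k ≤ b.2) : ∃ i, c i j = true ∧ c i k = true := by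
  induction h with
  | refl => exact absurd (haj.trans_lt (Fin.lt_def.mpr (by omega))) hkb.not_gt
  | @tail x y hp hs ih =>
    by_cases hkx : k ≤ x.2
    · exact ih hkx
    · obtain ⟨hrow, hcol⟩ := hs.1.row_eq_of_col_lt (by rw [not_le] at hkx; omega)
      have hxj : x.2 = j := Fin.ext (by omega)
      have hyk : y.2 = k := Fin.ext (by omega)
      exact ⟨x.1, hxj ▸ black_of_reflTransGen hp ha, hrow ▸ hyk ▸ hs.2⟩

theorem reflTransGen_of_col_eq {a b : Fin 2 × Fin n} (hb : c b.1 b.2 = true) (hab : a.2 = b.2) :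
    ReflTransGen (BlackStep c) a b := by
  by_cases hrow : a.1 = b.1
  · rw [show a = b from Prod.ext hrow hab]
  · exact .single ⟨Or.inr ⟨hab, hrow⟩, hb⟩

theorem reflTransGen_of_columns
    (hconv : ∀ j m k : Fin n, j ≤ m → m ≤ k → (∃ i, c i j = true) → (∃ i, c i k = true) →
      ∃ i, c i m = true)
    (hlink : ∀ j k : Fin n, k.val = j.val + 1 → (∃ i, c i j = true) → (∃ i, c i k = true) →
      ∃ i, c i j = true ∧ c i k = true)
    {a b : Fin 2 × Fin n} (ha : c a.1 a.2 = true) (hb : c b.1 b.2 = true) :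
    ReflTransGen (BlackStep c) a b := by
  suffices H : ∀ d, ∀ a b : Fin 2 × Fin n, c a.1 a.2 = true → c b.1 b.2 = true →
      b.2.val = a.2.val + d → ReflTransGen (BlackStep c) a b by
    rcases le_total a.2 b.2 with hab | hba
    · exact H (b.2.val - a.2.val) a b ha hb (by rw [Fin.le_def] at hab; omega)
    · exact reflTransGen_symm
        (H (a.2.val - b.2.val) b a hb ha (by rw [Fin.le_def] at hba; omega)) hb
  intro d
  induction d with
  | zero => exact fun a b _ hb hab => reflTransGen_of_col_eq hb (Fin.ext hab.symm)
  | succ d ih =>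
    intro a b ha hb hab
    let j : Fin n := ⟨a.2.val + d, by omega⟩
    have hj : ∃ i, c i j = true :=
      hconv a.2 j b.2 (Fin.le_def.mpr (by simp [j])) (Fin.le_def.mpr (by simp [j]; omega))
        ⟨a.1, ha⟩ ⟨b.1, hb⟩
    obtain ⟨i, hij, hib⟩ := hlink j b.2 (by simp [j]; omega) hj ⟨b.1, hb⟩
    have hstep : BlackStep c (i, j) (i, b.2) := ⟨Or.inl ⟨rfl, Or.inl (by simp [j]; omega)⟩, hib⟩
    exact ((ih a (i, j) ha hij rfl).tail hstep).trans (reflTransGen_of_col_eq hb rfl)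

end Paths

/-- Adjacent occupied columns of a Nurikabe grid share a black row (connectivity) and are not
both full (no black `2 × 2` square). -/
def ColumnsCompat (p q : Fin 2 → Bool) : Prop :=
  (∃ i, p i = true ∧ q i = true) ∧ ¬∀ i, p i = true ∧ q i = true

instance : DecidableRel ColumnsCompat := fun _ _ => by unfold ColumnsCompat; infer_instance

theorem isNurikabe_iff {n : ℕ} {c : Fin 2 → Fin n → Bool} :
    IsNurikabe c ↔
      (∀ j m k : Fin n, j ≤ m → m ≤ k → (∃ i, c i j = true) → (∃ i, c i k = true) →
        ∃ i, c i m = true) ∧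
      ∀ j k : Fin n, k.val = j.val + 1 → (∃ i, c i j = true) → (∃ i, c i k = true) →
        ColumnsCompat (c · j) (c · k) := by
  have hsucc : ∀ (j : Fin n) (h : j.val + 1 < n) (k : Fin n), k.val = j.val + 1 →
      (⟨j.val + 1, h⟩ : Fin n) = k := fun _ _ _ hk => Fin.ext hk.symm
  constructor
  · rintro ⟨hconn, hsq⟩
    refine ⟨fun j m k hjm hmk ⟨i, hj⟩ ⟨i', hk⟩ =>
      exists_black_of_reflTransGen (hconn (i, j) (i', k) hj hk) hj hjm hmk,
      fun j k hjk ⟨i, hj⟩ ⟨i', hk⟩ =>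
        ⟨exists_row_of_reflTransGen (hconn (i, j) (i', k) hj hk) hj hjk le_rfl le_rfl, ?_⟩⟩
    rw [Fin.forall_fin_two]
    rintro ⟨⟨h0j, h0k⟩, h1j, h1k⟩
    have hlt : j.val + 1 < n := hjk ▸ k.isLt
    exact hsq j hlt ⟨h0j, h1j, hsucc j hlt k hjk ▸ h0k, hsucc j hlt k hjk ▸ h1k⟩
  · rintro ⟨hconv, hcompat⟩
    refine ⟨fun a b ha hb => reflTransGen_of_columns hconv
      (fun j k hjk hj hk => (hcompat j k hjk hj hk).1) ha hb, ?_⟩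
    rintro j hlt ⟨h0j, h1j, h0k, h1k⟩
    exact (hcompat j _ rfl ⟨0, h0j⟩ ⟨0, h0k⟩).2 (Fin.forall_fin_two.mpr ⟨⟨h0j, h0k⟩, h1j, h1k⟩)

def IsColumnWord (w : List (Fin 2 → Bool)) : Prop :=
  (∀ p ∈ w, ∃ i, p i = true) ∧ w.IsChain ColumnsCompat

def gridOfWord (n l : ℕ) (w : List (Fin 2 → Bool)) : Fin 2 → Fin n → Bool :=
  fun i j => if h : l ≤ j.val ∧ j.val - l < w.length then w[j.val - l] i else false

section GridOfWord

variable {n l : ℕ} {w : List (Fin 2 → Bool)} {j : Fin n}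

theorem gridOfWord_apply (hl : l ≤ j.val) (hk : j.val - l < w.length) (i : Fin 2) :
    gridOfWord n l w i j = w[j.val - l] i :=
  dif_pos ⟨hl, hk⟩

theorem gridOfWord_col (hl : l ≤ j.val) (hk : j.val - l < w.length) :
    (gridOfWord n l w · j) = w[j.val - l] :=
  funext (gridOfWord_apply hl hk)

theorem gridOfWord_eq_false (h : ¬(l ≤ j.val ∧ j.val - l < w.length)) (i : Fin 2) :
    gridOfWord n l w i j = false :=
  dif_neg h

theorem exists_gridOfWord_iff (hw : ∀ p ∈ w, ∃ i, p i = true) :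
    (∃ i, gridOfWord n l w i j = true) ↔ l ≤ j.val ∧ j.val < l + w.length := by
  by_cases h : l ≤ j.val ∧ j.val - l < w.length
  · simp only [gridOfWord_apply h.1 h.2]
    exact iff_of_true (hw _ (List.getElem_mem _)) (by omega)
  · simp only [gridOfWord_eq_false h]
    exact iff_of_false (by simp) (by omega)

theorem isNurikabe_gridOfWord (hw : IsColumnWord w) : IsNurikabe (gridOfWord n l w) := by
  simp only [isNurikabe_iff, exists_gridOfWord_iff hw.1]
  refine ⟨fun j m k hjm hmk hj hk => ⟨by omega, by omega⟩, fun j k hjk hj hk => ?_⟩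
  rw [gridOfWord_col hj.1 (by omega), gridOfWord_col hk.1 (by omega)]
  have := List.isChain_iff_getElem.mp hw.2 (j.val - l) (by omega)
  simpa [show k.val - l = j.val - l + 1 by omega] using this

theorem gridOfWord_injective {l' : ℕ} {w' : List (Fin 2 → Bool)} (hw : IsColumnWord w)
    (hw' : IsColumnWord w') (hne : w ≠ []) (hne' : w' ≠ []) (hlen : l + w.length ≤ n)
    (hlen' : l' + w'.length ≤ n) (h : gridOfWord n l w = gridOfWord n l' w') :
    l = l' ∧ w = w' := by
  have hocc (j : Fin n) : (l ≤ j.val ∧ j.val < l + w.length) ↔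
      (l' ≤ j.val ∧ j.val < l' + w'.length) := by
    rw [← exists_gridOfWord_iff hw.1, ← exists_gridOfWord_iff hw'.1, h]
  have hpos := List.length_pos_iff.mpr hne
  have hpos' := List.length_pos_iff.mpr hne'
  -- the occupied columns form the interval `[l, l + |w|)`; compare its endpoints
  have e1 := hocc ⟨l, by omega⟩
  have e2 := hocc ⟨l', by omega⟩
  have e3 := hocc ⟨l + w.length - 1, by omega⟩
  have e4 := hocc ⟨l' + w'.length - 1, by omega⟩
  simp only at e1 e2 e3 e4
  obtain rfl : l = l' := by omega
  refine ⟨rfl, List.ext_getElem (by omega) fun k hk hk' => ?_⟩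
  let j : Fin n := ⟨l + k, by omega⟩
  have h1 := gridOfWord_col (l := l) (w := w) (j := j) (by simp [j]) (by simpa [j])
  have h2 := gridOfWord_col (l := l) (w := w') (j := j) (by simp [j]) (by simpa [j])
  simp only [j, add_tsub_cancel_left] at h1 h2
  rw [← h1, ← h2, h]

end GridOfWord

theorem exists_occupied_iff_mem_Icc {n : ℕ} {c : Fin 2 → Fin n → Bool}
    (hconv : ∀ j m k : Fin n, j ≤ m → m ≤ k → (∃ i, c i j = true) → (∃ i, c i k = true) →
      ∃ i, c i m = true)
    (hblack : ∃ i j, c i j = true) :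
    ∃ l r : Fin n, l ≤ r ∧ ∀ j, (∃ i, c i j = true) ↔ l ≤ j ∧ j ≤ r := by
  let occ : Finset (Fin n) := Finset.univ.filter fun j => ∃ i, c i j = true
  have hmem {j : Fin n} : j ∈ occ ↔ ∃ i, c i j = true := by simp [occ]
  obtain ⟨i, j, hij⟩ := hblack
  have hocc : occ.Nonempty := ⟨j, hmem.mpr ⟨i, hij⟩⟩
  refine ⟨occ.min' hocc, occ.max' hocc, occ.min'_le _ (occ.max'_mem hocc), fun j =>
    ⟨fun h => ⟨occ.min'_le _ (hmem.mpr h), occ.le_max' _ (hmem.mpr h)⟩,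
      fun h => hconv _ j _ h.1 h.2 (hmem.mp (occ.min'_mem hocc)) (hmem.mp (occ.max'_mem hocc))⟩⟩

theorem exists_eq_gridOfWord {n : ℕ} {c : Fin 2 → Fin n → Bool} (hc : IsNurikabe c)
    (hblack : ∃ i j, c i j = true) :
    ∃ l w, w ≠ [] ∧ IsColumnWord w ∧ l + w.length ≤ n ∧ gridOfWord n l w = c := by
  obtain ⟨hconv, hcompat⟩ := isNurikabe_iff.mp hc
  obtain ⟨l, r, hlr, hcols⟩ := exists_occupied_iff_mem_Icc hconv hblack
  rw [Fin.le_def] at hlr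
  have hocc (t : ℕ) (ht : t ≤ r.val - l.val) : ∃ i, c i ⟨l.val + t, by omega⟩ = true :=
    (hcols _).mpr ⟨Fin.le_def.mpr (by simp), Fin.le_def.mpr (by simp; omega)⟩
  refine ⟨l, List.ofFn (n := r.val - l.val + 1) fun t => (c · ⟨l.val + t.val, by omega⟩),
    by simp, ⟨?_, ?_⟩, by simp; omega, ?_⟩
  · simp only [List.forall_mem_ofFn_iff]
    exact fun t => hocc t (by omega)
  · refine List.isChain_iff_getElem.mpr fun t ht => ?_
    simp only [List.length_ofFn] at ht
    simp only [List.getElem_ofFn]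
    exact hcompat _ _ (by simp; omega) (hocc t (by omega)) (hocc (t + 1) (by omega))
  · funext i j
    by_cases hj : l ≤ j ∧ j ≤ r
    · rw [Fin.le_def, Fin.le_def] at hj
      rw [gridOfWord_apply hj.1 (by simp; omega), List.getElem_ofFn]
      congr
      exact Nat.add_sub_cancel' hj.1
    · rw [gridOfWord_eq_false (by simp; omega)]
      by_contra hij
      exact hj ((hcols j).mp ⟨i, by simpa using hij⟩)

theorem isColumnWord_cons {p : Fin 2 → Bool} {w : List (Fin 2 → Bool)} (hw : w ≠ []) :
    IsColumnWord (p :: w) ↔ ColumnsCompat p w.headI ∧ IsColumnWord w := by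
  obtain ⟨q, w, rfl⟩ := List.exists_cons_of_ne_nil hw
  simp only [IsColumnWord, List.mem_cons, forall_eq_or_imp, List.isChain_cons_cons,
    List.headI_cons]
  exact ⟨fun ⟨⟨_, hq, hw⟩, hpq, hch⟩ => ⟨hpq, ⟨hq, hw⟩, hch⟩,
    fun ⟨hpq, ⟨hq, hw⟩, hch⟩ => ⟨⟨hpq.1.imp fun _ => And.left, hq, hw⟩, hpq, hch⟩⟩

/-- The column words of length `k + 1`. -/
def columnWords : ℕ → Finset (List (Fin 2 → Bool))
  | 0 => (Finset.univ.filter fun p => ∃ i, p i = true).image ([·])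
  | k + 1 => (columnWords k).biUnion fun w =>
      (Finset.univ.filter (ColumnsCompat · w.headI)).image (· :: w)

theorem mem_columnWords {k : ℕ} {w : List (Fin 2 → Bool)} :
    w ∈ columnWords k ↔ w.length = k + 1 ∧ IsColumnWord w := by
  induction k generalizing w with
  | zero =>
    simp only [columnWords, Finset.mem_image, Finset.mem_filter, Finset.mem_univ, true_and,
      zero_add, List.length_eq_one_iff, IsColumnWord]
    constructor
    · rintro ⟨p, hp, rfl⟩
      exact ⟨⟨p, rfl⟩, by simpa using hp, List.isChain_singleton p⟩
    · rintro ⟨⟨p, rfl⟩, hp, -⟩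
      exact ⟨p, by simpa using hp, rfl⟩
  | succ k ih =>
    simp only [columnWords, Finset.mem_biUnion, Finset.mem_image, Finset.mem_filter,
      Finset.mem_univ, true_and, ih]
    constructor
    · rintro ⟨v, ⟨hlen, hv⟩, p, hp, rfl⟩
      have hne : v ≠ [] := List.ne_nil_of_length_eq_add_one hlen
      exact ⟨by simp [hlen], (isColumnWord_cons hne).mpr ⟨hp, hv⟩⟩
    · rintro ⟨hlen, hw⟩
      obtain ⟨p, v, rfl⟩ := List.exists_cons_of_ne_nil (List.ne_nil_of_length_eq_add_one hlen)
      have hne : v ≠ [] := List.ne_nil_of_length_eq_add_one (by simpa using hlen)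
      obtain ⟨hp, hv⟩ := (isColumnWord_cons hne).mp hw
      exact ⟨v, ⟨by simpa using hlen, hv⟩, p, hp, rfl⟩

theorem card_filter_columnsCompat {q : Fin 2 → Bool} (hq : ∃ i, q i = true) :
    (Finset.univ.filter (ColumnsCompat · q)).card = 2 := by
  revert q
  decide

theorem card_columnWords (k : ℕ) : (columnWords k).card = 3 * 2 ^ k := by
  induction k with
  | zero => decide
  | succ k ih =>
    rw [columnWords, Finset.card_biUnion, Finset.sum_congr rfl fun w hw => ?_, Finset.sum_const,
      ih, smul_eq_mul, pow_succ, mul_assoc]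
    · obtain ⟨hlen, hletters, -⟩ := mem_columnWords.mp hw
      obtain ⟨q, v, rfl⟩ := List.exists_cons_of_ne_nil (List.ne_nil_of_length_eq_add_one hlen)
      rw [Finset.card_image_of_injective _ fun _ _ h => (List.cons.inj h).1]
      exact card_filter_columnsCompat (hletters q List.mem_cons_self)
    · intro v _ v' _ hvv'
      simp only [Function.onFun, Finset.disjoint_left, Finset.mem_image]
      rintro _ ⟨p, -, rfl⟩ ⟨p', -, h⟩
      exact hvv' (List.cons.inj h).2.symm

def columnWordsUpTo (m : ℕ) : Finset (List (Fin 2 → Bool)) :=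
  (Finset.range m).biUnion columnWords

theorem mem_columnWordsUpTo {m : ℕ} {w : List (Fin 2 → Bool)} :
    w ∈ columnWordsUpTo m ↔ w ≠ [] ∧ w.length ≤ m ∧ IsColumnWord w := by
  simp only [columnWordsUpTo, Finset.mem_biUnion, Finset.mem_range, mem_columnWords,
    ← List.length_pos_iff]
  constructor
  · rintro ⟨k, hk, hlen, hw⟩
    exact ⟨by omega, by omega, hw⟩
  · rintro ⟨hpos, hlen, hw⟩
    exact ⟨w.length - 1, by omega, by omega, hw⟩

theorem card_columnWordsUpTo (m : ℕ) : (columnWordsUpTo m).card + 3 = 3 * 2 ^ m := by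
  rw [columnWordsUpTo, Finset.card_biUnion]
  · induction m with
    | zero => rfl
    | succ m ih =>
      rw [Finset.sum_range_succ, card_columnWords, pow_succ]
      omega
  · intro k _ k' _ hkk'
    simp only [Function.onFun, Finset.disjoint_left, mem_columnWords]
    exact fun w hk hk' => hkk' (by omega)

def placements (n : ℕ) : Finset (Σ _ : ℕ, List (Fin 2 → Bool)) :=
  (Finset.range n).sigma fun l => columnWordsUpTo (n - l)

theorem mem_placements {n : ℕ} {x : Σ _ : ℕ, List (Fin 2 → Bool)} :
    x ∈ placements n ↔ x.2 ≠ [] ∧ IsColumnWord x.2 ∧ x.1 + x.2.length ≤ n := by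
  simp only [placements, Finset.mem_sigma, Finset.mem_range, mem_columnWordsUpTo,
    ← List.length_pos_iff]
  constructor
  · rintro ⟨-, hpos, hlen, hw⟩
    exact ⟨hpos, hw, by omega⟩
  · rintro ⟨hpos, hw, hlen⟩
    exact ⟨by omega, hpos, by omega, hw⟩

theorem card_placements (n : ℕ) : (placements n).card + 3 * n + 6 = 6 * 2 ^ n := by
  rw [placements, Finset.card_sigma]
  induction n with
  | zero => rfl
  | succ n ih =>
    have hlast := card_columnWordsUpTo (n + 1)
    simp only [Finset.sum_range_succ', Nat.add_sub_add_right, Nat.sub_zero, pow_succ] at ih ⊢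
    omega

def nurikabeGrids (n : ℕ) : Finset (Fin 2 → Fin n → Bool) :=
  insert (fun _ _ => false) ((placements n).image fun x => gridOfWord n x.1 x.2)

theorem isNurikabe_iff_mem_nurikabeGrids {n : ℕ} {c : Fin 2 → Fin n → Bool} :
    IsNurikabe c ↔ c ∈ nurikabeGrids n := by
  simp only [nurikabeGrids, Finset.mem_insert, Finset.mem_image, mem_placements]
  constructor
  · intro hc
    by_cases hblack : ∃ i j, c i j = true
    · obtain ⟨l, w, hne, hw, hlen, rfl⟩ := exists_eq_gridOfWord hc hblack
      exact Or.inr ⟨⟨l, w⟩, ⟨hne, hw, hlen⟩, rfl⟩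
    · simp only [not_exists, Bool.not_eq_true] at hblack
      exact Or.inl (funext₂ hblack)
  · rintro (rfl | ⟨x, ⟨-, hw, -⟩, rfl⟩)
    · exact ⟨fun _ _ ha _ => absurd ha (by simp), fun _ _ h => absurd h.1 (by simp)⟩
    · exact isNurikabe_gridOfWord hw

theorem card_nurikabeGrids (n : ℕ) : (nurikabeGrids n).card = (placements n).card + 1 := by
  rw [nurikabeGrids, Finset.card_insert_of_notMem, Finset.card_image_of_injOn]
  · rintro ⟨l, w⟩ hx ⟨l', w'⟩ hx' h
    rw [Finset.mem_coe, mem_placements] at hx hx'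
    obtain ⟨rfl, rfl⟩ := gridOfWord_injective hx.2.1 hx'.2.1 hx.1 hx'.1 hx.2.2 hx'.2.2 h
    rfl
  · simp only [Finset.mem_image, not_exists, not_and]
    rintro ⟨l, w⟩ hx h
    obtain ⟨hne, hw, hlen⟩ := mem_placements.mp hx
    dsimp only at hne hw hlen h
    have hpos := List.length_pos_iff.mpr hne
    obtain ⟨i, hi⟩ := (exists_gridOfWord_iff (n := n) (j := ⟨l, by omega⟩) hw.1).mpr
      ⟨le_rfl, by simp [hpos]⟩
    simp [h] at hi

theorem card_isNurikabe (n : ℕ) :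
    Nat.card {c : Fin 2 → Fin n → Bool // IsNurikabe c} + 3 * n + 5 = 6 * 2 ^ n := by
  rw [Nat.card_congr (Equiv.subtypeEquivRight fun _ => isNurikabe_iff_mem_nurikabeGrids),
    Nat.card_eq_finsetCard, card_nurikabeGrids]
  have := card_placements n
  omega

theorem List.Nodup.natCard_subtype_mem {α : Type*} {l : List α} (h : l.Nodup) :
    Nat.card {x // x ∈ l} = l.length := by
  classical
  rw [← List.toFinset_card_of_nodup h, ← Nat.card_eq_finsetCard]
  simp

theorem nurikabe_ziggu_bijection (n : ℕ) (hn : 1 ≤ n) :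
    Nonempty ({c : Fin 2 → Fin n → Bool // IsNurikabe c} ≃
      {w : List ℕ // w ∈ zigguShort n}) ∧
    Nat.card {c : Fin 2 → Fin n → Bool // IsNurikabe c} = 6 * 2 ^ n - 3 * n - 5 ∧
    (zigguShort n).length = 6 * 2 ^ n - 3 * n - 5 := by
  obtain ⟨m, rfl⟩ : ∃ m, n = m + 1 := ⟨n - 1, by omega⟩
  have hgrids := card_isNurikabe (m + 1)
  have hstates := length_zigguShort m
  have hcard := (nodup_zigguShort m).natCard_subtype_mem
  exact ⟨Finite.card_eq.mp (by omega), by omega, by omega⟩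
end
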